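/- arXiv:2302.04704 — 2 statements merged into one kernel-verified Lean document; each statement's English description precedes it below -/
import Mathlib

section
/- Let φ, ψ be submodular setfunctions on a set-algebra (J, B) forming a diverging pair, i.e., φ − ψ is increasing with respect to inclusion. Then min(φ, ψ), defined by X ↦ min(φ(X), ψ(X)), is submodular. -/
/-! Split according to which of `φ`, `ψ` attains the minimum at `x` and at `y`. If it is the same
function at both, submodularity of that function suffices. If `min` picks `φ` at `x` and `ψ` at `y`,
bound the left side by `ψ (x ⊔ y) + φ (x ⊓ y)`; monotonicity of `φ - ψ` along `x ⊓ y ≤ x` trades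
`φ (x ⊓ y)` for `ψ (x ⊓ y) + φ x - ψ x`, and submodularity of `ψ` finishes. -/

section

variable {α β : Type*} [Lattice α] [AddCommGroup β] [LinearOrder β] [IsOrderedAddMonoid β]

def IsSubmodularOn (S : Set α) (f : α → β) : Prop :=
  ∀ x ∈ S, ∀ y ∈ S, f (x ⊔ y) + f (x ⊓ y) ≤ f x + f y

theorem min_sup_add_min_inf_le_of_diverging {φ ψ : α → β} {x y : α}
    (hψ : ψ (x ⊔ y) + ψ (x ⊓ y) ≤ ψ x + ψ y)
    (hdiv : φ (x ⊓ y) - ψ (x ⊓ y) ≤ φ x - ψ x) :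
    min (φ (x ⊔ y)) (ψ (x ⊔ y)) + min (φ (x ⊓ y)) (ψ (x ⊓ y)) ≤ φ x + ψ y :=
  calc min (φ (x ⊔ y)) (ψ (x ⊔ y)) + min (φ (x ⊓ y)) (ψ (x ⊓ y))
      ≤ ψ (x ⊔ y) + φ (x ⊓ y) := add_le_add (min_le_right _ _) (min_le_left _ _)
    _ = ψ (x ⊔ y) + ψ (x ⊓ y) + (φ (x ⊓ y) - ψ (x ⊓ y)) := by abel
    _ ≤ ψ x + ψ y + (φ x - ψ x) := add_le_add hψ hdiv
    _ = φ x + ψ y := by abel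

theorem IsSubmodularOn.min {S : Set α} {φ ψ : α → β} (hS : ∀ x ∈ S, ∀ y ∈ S, x ⊓ y ∈ S)
    (hφ : IsSubmodularOn S φ) (hψ : IsSubmodularOn S ψ) (hdiv : MonotoneOn (φ - ψ) S) :
    IsSubmodularOn S fun x ↦ min (φ x) (ψ x) := by
  intro x hx y hy
  have hdiv_left : φ (x ⊓ y) - ψ (x ⊓ y) ≤ φ x - ψ x := hdiv (hS x hx y hy) hx inf_le_left
  have hdiv_right : φ (y ⊓ x) - ψ (y ⊓ x) ≤ φ y - ψ y := hdiv (hS y hy x hx) hy inf_le_left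
  rcases min_cases (φ x) (ψ x) with ⟨hx_min, -⟩ | ⟨hx_min, -⟩ <;>
    rcases min_cases (φ y) (ψ y) with ⟨hy_min, -⟩ | ⟨hy_min, -⟩ <;>
    simp only [hx_min, hy_min]
  · exact (add_le_add (min_le_left _ _) (min_le_left _ _)).trans (hφ x hx y hy)
  · exact min_sup_add_min_inf_le_of_diverging (hψ x hx y hy) hdiv_left
  · rw [sup_comm x y, inf_comm x y, add_comm (ψ x)]
    exact min_sup_add_min_inf_le_of_diverging (hψ y hy x hx) hdiv_right
  · exact (add_le_add (min_le_right _ _) (min_le_right _ _)).trans (hψ x hx y hy)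

end

theorem stmt_7_general {J : Type*} (B : Set (Set J))
    (hinter : ∀ A ∈ B, ∀ C ∈ B, A ∩ C ∈ B)
    (φ ψ : Set J → ℝ)
    (hφ : ∀ X ∈ B, ∀ Y ∈ B, φ (X ∪ Y) + φ (X ∩ Y) ≤ φ X + φ Y)
    (hψ : ∀ X ∈ B, ∀ Y ∈ B, ψ (X ∪ Y) + ψ (X ∩ Y) ≤ ψ X + ψ Y)
    (hdiv : ∀ X ∈ B, ∀ Y ∈ B, X ⊆ Y → φ X - ψ X ≤ φ Y - ψ Y) :
    ∀ X ∈ B, ∀ Y ∈ B,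
      min (φ (X ∪ Y)) (ψ (X ∪ Y)) + min (φ (X ∩ Y)) (ψ (X ∩ Y)) ≤
        min (φ X) (ψ X) + min (φ Y) (ψ Y) :=
  IsSubmodularOn.min hinter hφ hψ hdiv

theorem stmt_7 {J : Type*} (B : Set (Set J))
    (hempty : ∅ ∈ B) (huniv : Set.univ ∈ B)
    (hcompl : ∀ A ∈ B, Aᶜ ∈ B)
    (hunion : ∀ A ∈ B, ∀ C ∈ B, A ∪ C ∈ B)
    (hinter : ∀ A ∈ B, ∀ C ∈ B, A ∩ C ∈ B)
    (φ ψ : Set J → ℝ)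
    (hφ : ∀ X ∈ B, ∀ Y ∈ B, φ (X ∪ Y) + φ (X ∩ Y) ≤ φ X + φ Y)
    (hψ : ∀ X ∈ B, ∀ Y ∈ B, ψ (X ∪ Y) + ψ (X ∩ Y) ≤ ψ X + ψ Y)
    (hdiv : ∀ X ∈ B, ∀ Y ∈ B, X ⊆ Y → φ X - ψ X ≤ φ Y - ψ Y) :
    ∀ X ∈ B, ∀ Y ∈ B,
      min (φ (X ∪ Y)) (ψ (X ∪ Y)) + min (φ (X ∩ Y)) (ψ (X ∩ Y)) ≤
        min (φ X) (ψ X) + min (φ Y) (ψ Y) :=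
  stmt_7_general B hinter φ ψ hφ hψ hdiv
end

section
/- Let φ be a setfunction with bounded variation on a sigma-algebra with φ(∅)=0. The Choquet extension φ̂ is a convex functional on bounded measurable functions if and only if φ is submodular. -/
/-!
Evaluating `φ̂` at the indicators of `X` and `Y` and at their mean, whose level sets are `X ∪ Y`
and `X ∩ Y`, shows that convexity forces submodularity.

Conversely, `φ̂` is positively homogeneous (substitute `t = a s`), so convexity amounts to
subadditivity. For `ℕ`-valued `p ≤ L` the Choquet integral of `c + δ p` is
`c φ(J) + δ ∑_{k < L} φ {k + 1 ≤ p}`, and this sum is subadditive in `p` when `φ` is submodular: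
write `q` as a sum of layers `𝟙_{n + 1 ≤ q}` and add them to `p` one at a time, each layer costing
at most `φ {n + 1 ≤ q}`. Bounded variation makes `t ↦ φ {t ≤ f}` a difference of monotone
functions, so rounding `f` down to the grid `c + δℕ` moves `φ̂ f` by at most `δ K`; let `δ → 0`.
-/

open MeasureTheory Set

lemma le_of_forall_pos_le_add_mul {a b C : ℝ} (h : ∀ δ > 0, a ≤ b + δ * C) : a ≤ b := by
  refine le_of_forall_pos_le_add fun ε hε => ?_
  have hC : 0 < |C| + 1 := by positivity
  calc a ≤ b + ε / (|C| + 1) * C := h _ (by positivity)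
    _ ≤ b + ε / (|C| + 1) * (|C| + 1) := by gcongr; linarith [le_abs_self C]
    _ = b + ε := by rw [div_mul_cancel₀ _ hC.ne']

section ChoquetIntegral

variable {J : Type*} {φ : Set J → ℝ} {hat : (J → ℝ) → ℝ}

def IsChoquetIntegral (φ : Set J → ℝ) (hat : (J → ℝ) → ℝ) : Prop :=
  ∀ (f : J → ℝ) (c : ℝ), (∀ x, c ≤ f x) →
    hat f = (∫ t in Ioi c, φ {x | t ≤ f x}) + c * φ univ

def levelSum (φ : Set J → ℝ) (L : ℕ) (p : J → ℕ) : ℝ :=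
  ∑ k ∈ Finset.range L, φ {x | k + 1 ≤ p x}

lemma levelSet_anti {w : J → ℝ} {s t : ℝ} (hst : s ≤ t) : {x | t ≤ w x} ⊆ {x | s ≤ w x} :=
  fun _ hx => hst.trans hx

lemma setOf_le_grid {c δ t : ℝ} (hδ : 0 < δ) (p : J → ℕ) {k : ℕ}
    (ht : t ∈ Ioc (c + δ * k) (c + δ * (k + 1))) :
    {x | t ≤ c + δ * p x} = {x | k + 1 ≤ p x} := by
  ext x
  simp only [mem_ofPred_eq]
  constructor
  · intro hx
    have : (k : ℝ) < p x := lt_of_mul_lt_mul_left (by linarith [ht.1]) hδ.le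
    exact_mod_cast this
  · intro hx
    have : ((k : ℝ) + 1) ≤ p x := by exact_mod_cast hx
    nlinarith [ht.2]

namespace IsChoquetIntegral

lemma eq_intervalIntegral (hhat : IsChoquetIntegral φ hat) (h0 : φ ∅ = 0) {w : J → ℝ}
    {c M : ℝ} (hcM : c ≤ M) (hc : ∀ x, c ≤ w x) (hM : ∀ x, w x ≤ M) :
    hat w = (∫ t in c..M, φ {x | t ≤ w x}) + c * φ univ := by
  rw [hhat w c hc, intervalIntegral.integral_of_le hcM,
    setIntegral_eq_of_subset_of_forall_sdiff_eq_zero measurableSet_Ioi Ioc_subset_Ioi_self]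
  rintro t ⟨ht, htM⟩
  have hMt : M < t := by
    by_contra h
    exact htM ⟨ht, not_lt.mp h⟩
  rw [← h0]
  congr 1
  exact eq_empty_of_forall_notMem fun x (hx : t ≤ w x) => by linarith [hM x]

lemma eq_levelSum (hhat : IsChoquetIntegral φ hat) (h0 : φ ∅ = 0) {p : J → ℕ} {L : ℕ}
    (hp : ∀ x, p x ≤ L) (c : ℝ) {δ : ℝ} (hδ : 0 < δ) :
    hat (fun x => c + δ * p x) = c * φ univ + δ * levelSum φ L p := by
  have hpL : ∀ x, c + δ * p x ≤ c + δ * L := fun x => by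
    have : (p x : ℝ) ≤ L := by exact_mod_cast hp x
    nlinarith
  rw [hhat.eq_intervalIntegral h0 (c := c) (M := c + δ * L) (le_add_of_nonneg_right (by positivity))
    (fun x => le_add_of_nonneg_right (by positivity)) hpL]
  have hstep : ∀ k : ℕ, EqOn (fun _ => φ {x | k + 1 ≤ p x}) (fun t => φ {x | t ≤ c + δ * p x})
      (uIoc (c + δ * k) (c + δ * (k + 1))) := fun k t ht => by
    rw [uIoc_of_le (by nlinarith)] at ht
    simp only [setOf_le_grid hδ p ht]
  have hsum := intervalIntegral.sum_integral_adjacent_intervals (μ := volume)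
    (a := fun k : ℕ => c + δ * k) (n := L) fun k _ =>
      by simpa using (intervalIntegrable_const (c := φ {x | k + 1 ≤ p x})).congr (hstep k)
  simp only [Nat.cast_zero, mul_zero, add_zero] at hsum
  rw [← hsum, levelSum, Finset.mul_sum, add_comm]
  congr 1
  refine Finset.sum_congr rfl fun k _ => ?_
  push_cast
  rw [intervalIntegral.integral_congr_ae (g := fun _ => φ {x | k + 1 ≤ p x})
    (Filter.Eventually.of_forall fun t ht => ((hstep k) ht).symm)]
  simp only [intervalIntegral.integral_const, smul_eq_mul]
  ring

lemma const_mul (hhat : IsChoquetIntegral φ hat) (h0 : φ ∅ = 0) {f : J → ℝ}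
    (hf : ∃ M : ℝ, ∀ x, |f x| ≤ M) {a : ℝ} (ha : 0 ≤ a) :
    hat (fun x => a * f x) = a * hat f := by
  obtain ⟨M, hM⟩ := hf
  have hlo : ∀ x, -|M| ≤ f x := fun x => by linarith [neg_abs_le (f x), hM x, le_abs_self M]
  have hhi : ∀ x, f x ≤ |M| := fun x => by linarith [le_abs_self (f x), hM x, le_abs_self M]
  have hM0 : -|M| ≤ |M| := by linarith [abs_nonneg M]
  rcases ha.eq_or_lt with rfl | ha
  · simp_rw [zero_mul]
    rw [hhat.eq_intervalIntegral h0 le_rfl (fun _ => le_rfl) fun _ => le_rfl]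
    simp
  rw [hhat.eq_intervalIntegral h0 (mul_le_mul_of_nonneg_left hM0 ha.le)
      (fun x => mul_le_mul_of_nonneg_left (hlo x) ha.le)
      (fun x => mul_le_mul_of_nonneg_left (hhi x) ha.le),
    hhat.eq_intervalIntegral h0 hM0 hlo hhi]
  have hsubst : (∫ s in -|M|..|M|, φ {x | s ≤ f x}) =
      a⁻¹ * ∫ t in a * -|M|..a * |M|, φ {x | t ≤ a * f x} := by
    rw [← smul_eq_mul, ← intervalIntegral.integral_comp_mul_left _ ha.ne']
    congr 1
    funext s
    congr 1
    ext x
    exact (mul_le_mul_iff_right₀ ha).symm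
  rw [hsubst, mul_add, ← mul_assoc, mul_inv_cancel₀ ha.ne', one_mul, mul_assoc]

end IsChoquetIntegral

end ChoquetIntegral

section Variation

variable {J : Type*} [MeasurableSpace J] (φ : Set J → ℝ)

def chainVariations (A : Set J) : Set ℝ :=
  {r | ∃ (n : ℕ) (X : ℕ → Set J), (∀ i ≤ n, MeasurableSet (X i)) ∧ (∀ i < n, X i ⊆ X (i + 1)) ∧
    X 0 = ∅ ∧ X n = A ∧ ∑ i ∈ Finset.range n, |φ (X (i + 1)) - φ (X i)| = r}

noncomputable def variation (A : Set J) : ℝ := sSup (chainVariations φ A)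

def HasVariationBound (K : ℝ) : Prop :=
  ∀ (n : ℕ) (X : ℕ → Set J), (∀ i ≤ n, MeasurableSet (X i)) → X 0 = ∅ → X n = univ →
    (∀ i < n, X i ⊆ X (i + 1)) → ∑ i ∈ Finset.range n, |φ (X (i + 1)) - φ (X i)| ≤ K

variable {φ} {K : ℝ} {A B : Set J}

lemma zero_mem_chainVariations_empty : (0 : ℝ) ∈ chainVariations φ ∅ :=
  ⟨0, fun _ => ∅, fun _ _ => .empty, fun _ h => absurd h (Nat.not_lt_zero _), rfl, rfl, by simp⟩

lemma add_abs_sub_mem_chainVariations {r : ℝ} (hr : r ∈ chainVariations φ A)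
    (hB : MeasurableSet B) (hAB : A ⊆ B) : r + |φ B - φ A| ∈ chainVariations φ B := by
  obtain ⟨n, X, hmeas, hmono, h0, rfl, rfl⟩ := hr
  refine ⟨n + 1, fun i => if i ≤ n then X i else B, fun i _ => ?_, fun i hi => ?_,
    by simp [h0], by simp, ?_⟩
  · dsimp only
    split_ifs with h
    exacts [hmeas i h, hB]
  · rcases (Nat.lt_succ_iff.mp hi).lt_or_eq with hi | rfl
    · simpa [hi.le, Nat.succ_le_of_lt hi] using hmono i hi
    · simpa using hAB
  · rw [Finset.sum_range_succ]
    congr 1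
    · refine Finset.sum_congr rfl fun i hi => ?_
      have hi := Finset.mem_range.mp hi
      simp [hi.le, Nat.succ_le_of_lt hi]
    · simp

lemma abs_sub_mem_chainVariations (hA : MeasurableSet A) : |φ A - φ ∅| ∈ chainVariations φ A := by
  simpa using add_abs_sub_mem_chainVariations zero_mem_chainVariations_empty hA (empty_subset A)

namespace HasVariationBound

lemma add_abs_sub_le (hK : HasVariationBound φ K) {r : ℝ} (hr : r ∈ chainVariations φ A) :
    r + |φ univ - φ A| ≤ K := by
  obtain ⟨n, X, hmeas, hmono, h0, hn, hsum⟩ :=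
    add_abs_sub_mem_chainVariations hr MeasurableSet.univ (subset_univ A)
  exact hsum ▸ hK n X hmeas h0 hn hmono

lemma bddAbove_chainVariations (hK : HasVariationBound φ K) (A : Set J) :
    BddAbove (chainVariations φ A) :=
  ⟨K, fun r hr => by linarith [hK.add_abs_sub_le hr, abs_nonneg (φ univ - φ A)]⟩

lemma variation_nonneg (hK : HasVariationBound φ K) (hA : MeasurableSet A) : 0 ≤ variation φ A :=
  (abs_nonneg _).trans (le_csSup (hK.bddAbove_chainVariations A) (abs_sub_mem_chainVariations hA))

lemma variation_le (hK : HasVariationBound φ K) (hA : MeasurableSet A) : variation φ A ≤ K :=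
  csSup_le ⟨_, abs_sub_mem_chainVariations hA⟩ fun r hr => by
    linarith [hK.add_abs_sub_le hr, abs_nonneg (φ univ - φ A)]

lemma abs_sub_le_variation_sub (hK : HasVariationBound φ K) (hA : MeasurableSet A)
    (hB : MeasurableSet B) (hAB : A ⊆ B) :
    |φ B - φ A| ≤ variation φ B - variation φ A := by
  have : variation φ A ≤ variation φ B - |φ B - φ A| :=
    csSup_le ⟨_, abs_sub_mem_chainVariations hA⟩ fun r hr => le_sub_iff_add_le.mpr <|
      le_csSup (hK.bddAbove_chainVariations B) (add_abs_sub_mem_chainVariations hr hB hAB)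
  linarith

lemma variation_mono (hK : HasVariationBound φ K) (hA : MeasurableSet A) (hB : MeasurableSet B)
    (hAB : A ⊆ B) :
    variation φ A ≤ variation φ B := by
  linarith [hK.abs_sub_le_variation_sub hA hB hAB, abs_nonneg (φ B - φ A)]

end HasVariationBound

variable {w w' : J → ℝ}

lemma measurableSet_levelSet (hw : Measurable w) (t : ℝ) : MeasurableSet {x | t ≤ w x} :=
  measurableSet_le measurable_const hw

namespace HasVariationBound

lemma antitone_variation_levelSet (hK : HasVariationBound φ K) (hw : Measurable w) :
    Antitone fun t => variation φ {x | t ≤ w x} := fun _ _ hst =>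
  hK.variation_mono (measurableSet_levelSet hw _) (measurableSet_levelSet hw _) (levelSet_anti hst)

/-- `t ↦ φ {t ≤ w}` is the difference of the antitone functions `V + φ` and `V`, where
`V t = variation φ {t ≤ w}`. -/
lemma intervalIntegrable_levelSet (hK : HasVariationBound φ K) (hw : Measurable w) (a b : ℝ) :
    IntervalIntegrable (fun t => φ {x | t ≤ w x}) volume a b := by
  have hV := hK.antitone_variation_levelSet hw
  have hVφ : Antitone fun t => variation φ {x | t ≤ w x} + φ {x | t ≤ w x} := fun s t hst => by
    have := hK.abs_sub_le_variation_sub (measurableSet_levelSet hw t)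
      (measurableSet_levelSet hw s) (levelSet_anti hst)
    linarith [neg_abs_le (φ {x | s ≤ w x} - φ {x | t ≤ w x})]
  simpa using hVφ.intervalIntegrable.sub (hV.intervalIntegrable (a := a) (b := b))

lemma abs_integral_levelSet_sub_le (hK : HasVariationBound φ K) (hw : Measurable w)
    (hw' : Measurable w') {δ : ℝ} (hδ : 0 ≤ δ) (hw'w : ∀ x, w' x ≤ w x)
    (hww' : ∀ x, w x ≤ w' x + δ) {a b : ℝ} (hab : a ≤ b) :
    |(∫ t in a..b, φ {x | t ≤ w x}) - ∫ t in a..b, φ {x | t ≤ w' x}| ≤ δ * K := by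
  set V := fun t => variation φ {x | t ≤ w' x}
  have hV : Antitone V := hK.antitone_variation_levelSet hw'
  have hVδ : Antitone fun t => V (t - δ) := fun s t hst => hV (by linarith)
  have hpt : ∀ t, |φ {x | t ≤ w x} - φ {x | t ≤ w' x}| ≤ V (t - δ) - V t := fun t => by
    have h1 : {x | t ≤ w' x} ⊆ {x | t ≤ w x} := fun x hx => le_trans hx (hw'w x)
    have h2 : {x | t ≤ w x} ⊆ {x | t - δ ≤ w' x} := fun x (hx : t ≤ w x) =>
      show t - δ ≤ w' x by linarith [hww' x]
    linarith [hK.abs_sub_le_variation_sub (measurableSet_levelSet hw' t)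
      (measurableSet_levelSet hw t) h1, hK.variation_mono (measurableSet_levelSet hw t)
      (measurableSet_levelSet hw' (t - δ)) h2]
  have hint := hK.intervalIntegrable_levelSet hw a b
  have hint' := hK.intervalIntegrable_levelSet hw' a b
  have hVK : ∀ t, ‖V t‖ ≤ K := fun t => by
    rw [Real.norm_eq_abs, abs_of_nonneg (hK.variation_nonneg (measurableSet_levelSet hw' t))]
    exact hK.variation_le (measurableSet_levelSet hw' t)
  calc |(∫ t in a..b, φ {x | t ≤ w x}) - ∫ t in a..b, φ {x | t ≤ w' x}|
      = |∫ t in a..b, (φ {x | t ≤ w x} - φ {x | t ≤ w' x})| := by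
        rw [intervalIntegral.integral_sub hint hint']
    _ ≤ ∫ t in a..b, |φ {x | t ≤ w x} - φ {x | t ≤ w' x}| :=
        intervalIntegral.abs_integral_le_integral_abs hab
    _ ≤ ∫ t in a..b, (V (t - δ) - V t) :=
        intervalIntegral.integral_mono_on hab (hint.sub hint').abs
          (hVδ.intervalIntegrable.sub hV.intervalIntegrable) fun t _ => hpt t
    _ = (∫ t in a - δ..a, V t) - ∫ t in b - δ..b, V t := by
        rw [intervalIntegral.integral_sub hVδ.intervalIntegrable hV.intervalIntegrable,
          intervalIntegral.integral_comp_sub_right V δ,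
          intervalIntegral.integral_interval_sub_interval_comm hV.intervalIntegrable
            hV.intervalIntegrable hV.intervalIntegrable]
    _ ≤ δ * K - 0 := by
        refine sub_le_sub ?_ (intervalIntegral.integral_nonneg (by linarith) fun t _ =>
          hK.variation_nonneg (measurableSet_levelSet hw' t))
        have := intervalIntegral.norm_integral_le_of_norm_le_const (a := a - δ) (b := a)
          fun t _ => hVK t
        rw [Real.norm_eq_abs, sub_sub_cancel, abs_of_nonneg hδ] at this
        linarith [le_abs_self (∫ t in a - δ..a, V t)]
    _ = δ * K := sub_zero _

end HasVariationBound

end Variation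

section Submodular

variable {J : Type*} [MeasurableSpace J] {φ : Set J → ℝ}

def IsSubmodular (φ : Set J → ℝ) : Prop :=
  ∀ X Y : Set J, MeasurableSet X → MeasurableSet Y → φ (X ∪ Y) + φ (X ∩ Y) ≤ φ X + φ Y

lemma measurableSet_le_nat {p : J → ℕ} (hp : Measurable p) (k : ℕ) :
    MeasurableSet {x | k ≤ p x} :=
  hp (measurableSet_Ici (a := k))

namespace IsSubmodular

/-- The level sets of `r + 𝟙_B` are `{k + 1 ≤ r} ∪ ({k ≤ r} ∩ B)`; submodularity bounds each
of them, and the correction terms telescope to `φ B`. -/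
lemma levelSum_add_indicator_le (hsub : IsSubmodular φ) (h0 : φ ∅ = 0) {r : J → ℕ}
    (hr : Measurable r) {B : Set J} (hB : MeasurableSet B) {L : ℕ} (hrB : ∀ x ∈ B, r x < L) :
    levelSum φ L (fun x => r x + B.indicator 1 x) ≤ levelSum φ L r + φ B := by
  have hlevel : ∀ k, {x | k + 1 ≤ r x + B.indicator 1 x} =
      {x | k + 1 ≤ r x} ∪ ({x | k ≤ r x} ∩ B) := fun k => by
    ext x
    by_cases hx : x ∈ B
    · simp only [mem_union, mem_inter_iff, mem_ofPred_eq, indicator_of_mem hx, Pi.one_apply,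
        hx, and_true]
      omega
    · simp only [mem_union, mem_inter_iff, mem_ofPred_eq, indicator_of_notMem hx, hx,
        and_false, or_false, add_zero]
  have hterm : ∀ k, φ {x | k + 1 ≤ r x + B.indicator 1 x} ≤
      φ {x | k + 1 ≤ r x} + (φ ({x | k ≤ r x} ∩ B) - φ ({x | k + 1 ≤ r x} ∩ B)) := fun k => by
    have hinter : {x | k + 1 ≤ r x} ∩ ({x | k ≤ r x} ∩ B) = {x | k + 1 ≤ r x} ∩ B := by
      ext x
      simp only [mem_inter_iff, mem_ofPred_eq]
      exact ⟨fun h => ⟨h.1, h.2.2⟩, fun h => ⟨h.1, by omega, h.2⟩⟩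
    have := hsub _ _ (measurableSet_le_nat hr (k + 1)) ((measurableSet_le_nat hr k).inter hB)
    rw [hinter] at this
    rw [hlevel]
    linarith
  have htop : {x | L ≤ r x} ∩ B = ∅ :=
    eq_empty_of_forall_notMem fun x ⟨hxL, hxB⟩ => (hrB x hxB).not_ge hxL
  calc levelSum φ L (fun x => r x + B.indicator 1 x)
      ≤ ∑ k ∈ Finset.range L,
          (φ {x | k + 1 ≤ r x} + (φ ({x | k ≤ r x} ∩ B) - φ ({x | k + 1 ≤ r x} ∩ B))) :=
        Finset.sum_le_sum fun k _ => hterm k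
    _ = levelSum φ L r + φ B := by
        rw [Finset.sum_add_distrib, Finset.sum_range_sub' (fun k => φ ({x | k ≤ r x} ∩ B)), htop,
          h0]
        simp [levelSum]

lemma levelSum_add_le (hsub : IsSubmodular φ) (h0 : φ ∅ = 0) {p q : J → ℕ} (hp : Measurable p)
    (hq : Measurable q) {L : ℕ} (hpq : ∀ x, p x + q x ≤ L) :
    levelSum φ L (fun x => p x + q x) ≤ levelSum φ L p + levelSum φ L q := by
  have hlayers : ∀ n, levelSum φ L (fun x => p x + min (q x) n) ≤
      levelSum φ L p + ∑ k ∈ Finset.range n, φ {x | k + 1 ≤ q x} := by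
    intro n
    induction n with
    | zero => simp
    | succ n ih =>
      have hsplit : (fun x => p x + min (q x) (n + 1)) =
          fun x => (p x + min (q x) n) + {x | n + 1 ≤ q x}.indicator 1 x := by
        funext x
        by_cases hx : n + 1 ≤ q x
        · simp only [indicator_of_mem (show x ∈ {x | n + 1 ≤ q x} from hx), Pi.one_apply]
          omega
        · simp only [indicator_of_notMem (show x ∉ {x | n + 1 ≤ q x} from hx)]
          omega
      rw [hsplit, Finset.sum_range_succ, ← add_assoc]
      refine (hsub.levelSum_add_indicator_le h0 (by fun_prop) (measurableSet_le_nat hq (n + 1))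
        fun x (hx : n + 1 ≤ q x) => ?_).trans (by linarith)
      have := hpq x
      omega
  have hmin : (fun x => p x + min (q x) L) = fun x => p x + q x :=
    funext fun x => by rw [min_eq_left (by have := hpq x; omega)]
  rw [← hmin]
  exact hlayers L

end IsSubmodular

end Submodular

section Convexity

variable {J : Type*} [MeasurableSpace J] {φ : Set J → ℝ} {K : ℝ} {hat : (J → ℝ) → ℝ}

def ConvexOnBoundedMeasurable (hat : (J → ℝ) → ℝ) : Prop :=
  ∀ f g : J → ℝ, Measurable f → Measurable g →
    (∃ M : ℝ, ∀ x, |f x| ≤ M) → (∃ M : ℝ, ∀ x, |g x| ≤ M) →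
    ∀ a b : ℝ, 0 ≤ a → 0 ≤ b → a + b = 1 →
      hat (fun x => a * f x + b * g x) ≤ a * hat f + b * hat g

lemma exists_grid_approx {u : J → ℝ} (hu : Measurable u) {c M δ : ℝ} (hδ : 0 < δ)
    (hc : ∀ x, c ≤ u x) (hM : ∀ x, u x ≤ M) :
    ∃ p : J → ℕ, Measurable p ∧ (∀ x, p x ≤ ⌊(M - c) / δ⌋₊) ∧
      ∀ x, c + δ * p x ≤ u x ∧ u x ≤ c + δ * p x + δ := by
  refine ⟨fun x => ⌊(u x - c) / δ⌋₊, by fun_prop,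
    fun x => Nat.floor_le_floor (by gcongr; exact hM x), fun x => ?_⟩
  have h1 := (le_div_iff₀' hδ).mp (Nat.floor_le (div_nonneg (sub_nonneg.mpr (hc x)) hδ.le))
  have h2 := (div_lt_iff₀' hδ).mp (Nat.lt_floor_add_one ((u x - c) / δ))
  constructor <;> linarith

namespace IsChoquetIntegral

lemma abs_sub_le (hhat : IsChoquetIntegral φ hat) (h0 : φ ∅ = 0) (hK : HasVariationBound φ K)
    {w w' : J → ℝ} (hw : Measurable w) (hw' : Measurable w') {δ : ℝ} (hδ : 0 ≤ δ)
    (hw'w : ∀ x, w' x ≤ w x) (hww' : ∀ x, w x ≤ w' x + δ) {c M : ℝ} (hcM : c ≤ M)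
    (hc : ∀ x, c ≤ w' x) (hM : ∀ x, w x ≤ M) :
    |hat w - hat w'| ≤ δ * K := by
  rw [hhat.eq_intervalIntegral h0 hcM (fun x => (hc x).trans (hw'w x)) hM,
    hhat.eq_intervalIntegral h0 hcM hc (fun x => (hw'w x).trans (hM x)), add_sub_add_right_eq_sub]
  exact hK.abs_integral_levelSet_sub_le hw hw' hδ hw'w hww' hcM

lemma add_le (hhat : IsChoquetIntegral φ hat) (h0 : φ ∅ = 0) (hK : HasVariationBound φ K)
    (hsub : IsSubmodular φ) {u v : J → ℝ} (hu : Measurable u) (hv : Measurable v)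
    (hub : ∃ M : ℝ, ∀ x, |u x| ≤ M) (hvb : ∃ M : ℝ, ∀ x, |v x| ≤ M) :
    hat (fun x => u x + v x) ≤ hat u + hat v := by
  obtain ⟨Mu, hMu⟩ := hub
  obtain ⟨Mv, hMv⟩ := hvb
  set M := max |Mu| |Mv|
  have hM0 : 0 ≤ M := (abs_nonneg _).trans (le_max_left _ _)
  have hu' : ∀ x, |u x| ≤ M := fun x => (hMu x).trans ((le_abs_self _).trans (le_max_left _ _))
  have hv' : ∀ x, |v x| ≤ M := fun x => (hMv x).trans ((le_abs_self _).trans (le_max_right _ _))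
  have hu₁ : ∀ x, -M ≤ u x := fun x => (abs_le.mp (hu' x)).1
  have hu₂ : ∀ x, u x ≤ M := fun x => (abs_le.mp (hu' x)).2
  have hv₁ : ∀ x, -M ≤ v x := fun x => (abs_le.mp (hv' x)).1
  have hv₂ : ∀ x, v x ≤ M := fun x => (abs_le.mp (hv' x)).2
  refine le_of_forall_pos_le_add_mul (C := 4 * K) fun δ hδ => ?_
  obtain ⟨p, hp, hpN, hpu⟩ := exists_grid_approx hu hδ hu₁ hu₂
  obtain ⟨q, hq, hqN, hqv⟩ := exists_grid_approx hv hδ hv₁ hv₂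
  set N := ⌊(M - -M) / δ⌋₊
  have hgu := hhat.abs_sub_le h0 hK hu (by fun_prop) hδ.le (fun x => (hpu x).1)
    (fun x => (hpu x).2) (neg_le_self hM0) (fun x => le_add_of_nonneg_right (by positivity)) hu₂
  have hgv := hhat.abs_sub_le h0 hK hv (by fun_prop) hδ.le (fun x => (hqv x).1)
    (fun x => (hqv x).2) (neg_le_self hM0) (fun x => le_add_of_nonneg_right (by positivity)) hv₂
  have hguv := hhat.abs_sub_le h0 hK (w := fun x => u x + v x)
    (w' := fun x => -M + -M + δ * ((p x + q x : ℕ) : ℝ)) (by fun_prop) (by fun_prop)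
    (δ := 2 * δ) (by positivity)
    (fun x => by push_cast; linarith [(hpu x).1, (hqv x).1])
    (fun x => by push_cast; linarith [(hpu x).2, (hqv x).2])
    (c := -M + -M) (M := M + M) (by linarith) (fun x => le_add_of_nonneg_right (by positivity))
    fun x => add_le_add (hu₂ x) (hv₂ x)
  have hS := hsub.levelSum_add_le h0 hp hq (L := N + N) fun x => add_le_add (hpN x) (hqN x)
  rw [hhat.eq_levelSum h0 (L := N + N) (fun x => le_add_right (hpN x)) _ hδ] at hgu
  rw [hhat.eq_levelSum h0 (L := N + N) (fun x => le_add_right (hqN x)) _ hδ] at hgv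
  rw [hhat.eq_levelSum h0 (L := N + N) (fun x => add_le_add (hpN x) (hqN x)) _ hδ] at hguv
  have := mul_le_mul_of_nonneg_left hS hδ.le
  linarith [abs_le.mp hgu, abs_le.mp hgv, abs_le.mp hguv]

lemma convexOnBoundedMeasurable (hhat : IsChoquetIntegral φ hat) (h0 : φ ∅ = 0)
    (hK : HasVariationBound φ K) (hsub : IsSubmodular φ) : ConvexOnBoundedMeasurable hat :=
  fun f g hf hg hfb hgb a b ha hb _ => by
    have hbdd {a : ℝ} (ha : 0 ≤ a) {f : J → ℝ} (hfb : ∃ M : ℝ, ∀ x, |f x| ≤ M) :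
        ∃ M : ℝ, ∀ x, |a * f x| ≤ M :=
      let ⟨M, hM⟩ := hfb
      ⟨a * M, fun x => by rw [abs_mul, abs_of_nonneg ha]; exact mul_le_mul_of_nonneg_left (hM x) ha⟩
    calc hat (fun x => a * f x + b * g x)
        ≤ hat (fun x => a * f x) + hat (fun x => b * g x) :=
          hhat.add_le h0 hK hsub (by fun_prop) (by fun_prop) (hbdd ha hfb) (hbdd hb hgb)
      _ = a * hat f + b * hat g := by rw [hhat.const_mul h0 hfb ha, hhat.const_mul h0 hgb hb]

lemma isSubmodular (hhat : IsChoquetIntegral φ hat) (h0 : φ ∅ = 0)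
    (hconv : ConvexOnBoundedMeasurable hat) : IsSubmodular φ := by
  intro X Y hX hY
  set p : J → ℕ := X.indicator 1
  set q : J → ℕ := Y.indicator 1
  have hp : Measurable p := measurable_one.indicator hX
  have hq : Measurable q := measurable_one.indicator hY
  have hbdd {p : J → ℕ} (hp : ∀ x, p x ≤ 1) : ∃ M : ℝ, ∀ x, |0 + 1 * (p x : ℝ)| ≤ M :=
    ⟨1, fun x => by rw [zero_add, one_mul, Nat.abs_cast]; exact_mod_cast hp x⟩
  have hp1 : ∀ x, p x ≤ 1 := fun x => by by_cases hx : x ∈ X <;> simp [p, hx]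
  have hq1 : ∀ x, q x ≤ 1 := fun x => by by_cases hx : x ∈ Y <;> simp [q, hx]
  have hmix : (fun x => 2⁻¹ * (0 + 1 * (p x : ℝ)) + 2⁻¹ * (0 + 1 * (q x : ℝ))) =
      fun x => 0 + 2⁻¹ * ((p x + q x : ℕ) : ℝ) := by
    funext x
    push_cast
    ring
  have h := hconv _ _ (by fun_prop) (by fun_prop) (hbdd hp1) (hbdd hq1) 2⁻¹ 2⁻¹
    (by norm_num) (by norm_num) (by norm_num)
  rw [hmix, hhat.eq_levelSum h0 (L := 2) (fun x => by have := hp1 x; have := hq1 x; omega) _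
      (by norm_num), hhat.eq_levelSum h0 hp1 _ one_pos, hhat.eq_levelSum h0 hq1 _ one_pos] at h
  have hX' : {x | 0 + 1 ≤ p x} = X := by ext x; by_cases hx : x ∈ X <;> simp [p, hx]
  have hY' : {x | 0 + 1 ≤ q x} = Y := by ext x; by_cases hx : x ∈ Y <;> simp [q, hx]
  have hU : {x | 0 + 1 ≤ p x + q x} = X ∪ Y := by
    ext x; by_cases hx : x ∈ X <;> by_cases hy : x ∈ Y <;> simp [p, q, hx, hy]
  have hI : {x | 1 + 1 ≤ p x + q x} = X ∩ Y := by
    ext x; by_cases hx : x ∈ X <;> by_cases hy : x ∈ Y <;> simp [p, q, hx, hy]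
  simp only [levelSum, Finset.sum_range_succ, Finset.sum_range_zero, hX', hY', hU,
    hI] at h
  linarith

end IsChoquetIntegral

end Convexity

open MeasureTheory in
theorem stmt_12 {J : Type*} [MeasurableSpace J] (φ : Set J → ℝ)
    (h0 : φ ∅ = 0)
    (hbv : ∃ K : ℝ, ∀ (n : ℕ) (X : ℕ → Set J),
        (∀ i ≤ n, MeasurableSet (X i)) → X 0 = ∅ → X n = Set.univ →
        (∀ i < n, X i ⊆ X (i + 1)) →
        ∑ i ∈ Finset.range n, |φ (X (i + 1)) - φ (X i)| ≤ K)
    (hat : (J → ℝ) → ℝ)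
    (hhat : ∀ (f : J → ℝ) (c : ℝ), (∀ x, c ≤ f x) →
      hat f = (∫ t in Set.Ioi c, φ {x | t ≤ f x}) + c * φ Set.univ) :
    (∀ f g : J → ℝ, Measurable f → Measurable g →
      (∃ M : ℝ, ∀ x, |f x| ≤ M) → (∃ M : ℝ, ∀ x, |g x| ≤ M) →
      ∀ a b : ℝ, 0 ≤ a → 0 ≤ b → a + b = 1 →
        hat (fun x => a * f x + b * g x) ≤ a * hat f + b * hat g) ↔
    (∀ X Y : Set J, MeasurableSet X → MeasurableSet Y →
      φ (X ∪ Y) + φ (X ∩ Y) ≤ φ X + φ Y) := by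
  obtain ⟨K, hK⟩ := hbv
  exact ⟨IsChoquetIntegral.isSubmodular hhat h0,
    IsChoquetIntegral.convexOnBoundedMeasurable hhat h0 hK⟩
end
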